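/- For every R > 0, the radial function g satisfies the radial heat equation in the 3-ball: for all r ∈ (0, R) and t > 0, ∂g/∂t(r, t) = (1/2) · (∂²g/∂r²(r, t) + (2/r) · ∂g/∂r(r, t)); in particular these derivatives of the series exist at all such points. -/

import Mathlib

/-!
Put `a = π / R`. Then `g R ρ t = u(ρ, t) / (2 R² ρ)` with
`u(x, t) = sineHeat a x t = ∑ₖ (k+1) e^{-((k+1)a)² t / 2} sin((k+1) a x)`.
Every term of `u` solves the one-dimensional heat equation `∂ₜu = ½ ∂ₓ²u`, and for `t > 0`
the Gaussian factor dominates every polynomial weight, so `u` may be differentiated term by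
term and solves it as well. For any `u`, `(u/ρ)'' + (2/ρ)(u/ρ)' = u''/ρ`, which turns the
one-dimensional equation for `u` into the radial equation in the 3-ball for `u/ρ`.
-/

open Real Filter Topology MeasureTheory

/-- Radially symmetric forward Kolmogorov solution for a standard 3-dimensional
Brownian motion started at the center of the ball of radius `R` and killed at its
boundary: `g(r, t) = ∑_{k≥1} (kπ/(2πR²r)) sin(kπr/R) exp(-k²π²t/(2R²))`. -/
noncomputable def g (R r t : ℝ) : ℝ :=
  ∑' k : ℕ, (((k : ℝ) + 1) * π / (2 * π * R ^ 2 * r)) *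
    Real.sin (((k : ℝ) + 1) * π * r / R) *
    Real.exp (-(((k : ℝ) + 1) ^ 2 * π ^ 2 * t) / (2 * R ^ 2))

theorem summable_pow_mul_exp_neg_mul_sq (m : ℕ) {c : ℝ} (hc : 0 < c) :
    Summable fun k : ℕ => ((k : ℝ) + 1) ^ m * exp (-c * ((k : ℝ) + 1) ^ 2) := by
  refine ((summable_nat_add_iff 1).2 (summable_pow_mul_exp_neg_nat_mul m hc)).of_nonneg_of_le
    (fun k => by positivity) fun k => ?_
  have hk : 0 ≤ c * ((k : ℝ) * (k + 1)) := by positivity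
  push_cast
  exact mul_le_mul_of_nonneg_left (exp_le_exp.2 (by nlinarith)) (by positivity)

theorem hasDerivAt_tsum_mul_comp_mul {f f' : ℝ → ℝ} {C : ℝ} (hf : ∀ y, HasDerivAt f (f' y) y)
    (hf' : ∀ y, |f' y| ≤ C) {w : ℕ → ℝ} (hw : Summable fun k : ℕ => ((k : ℝ) + 1) * w k)
    (a x : ℝ) :
    HasDerivAt (fun y => ∑' k : ℕ, w k * f (((k : ℝ) + 1) * a * y))
      (∑' k : ℕ, w k * (((k : ℝ) + 1) * a) * f' (((k : ℝ) + 1) * a * x)) x := by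
  have hw0 : Summable w := hw.abs.of_norm_bounded fun k => by
    rw [Real.norm_eq_abs, abs_mul, abs_of_pos (by positivity : (0 : ℝ) < k + 1)]
    exact le_mul_of_one_le_left (abs_nonneg _) (by simp)
  refine hasDerivAt_tsum (g := fun k y => w k * f (((k : ℝ) + 1) * a * y))
    (g' := fun k y => w k * (((k : ℝ) + 1) * a) * f' (((k : ℝ) + 1) * a * y)) (y₀ := 0)
    ((hw.abs.mul_right |a|).mul_right C) (fun k y => ?_) (fun k y => ?_) ?_ x
  · exact (((hf _).comp y ((hasDerivAt_id' y).const_mul _)).const_mul (w k)).congr_deriv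
      (by simp only [mul_one]; ring)
  · calc ‖w k * (((k : ℝ) + 1) * a) * f' (((k : ℝ) + 1) * a * y)‖
        = |((k : ℝ) + 1) * w k| * |a| * |f' (((k : ℝ) + 1) * a * y)| := by
          simp only [Real.norm_eq_abs, abs_mul]; ring
      _ ≤ |((k : ℝ) + 1) * w k| * |a| * C := by gcongr; exact hf' _
  · simpa using hw0.mul_right (f 0)

noncomputable def heatCoeff (a t : ℝ) (k : ℕ) : ℝ :=
  ((k : ℝ) + 1) * exp (-(((k : ℝ) + 1) * a) ^ 2 * t / 2)

noncomputable def sineHeat (a x t : ℝ) : ℝ :=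
  ∑' k : ℕ, heatCoeff a t k * sin (((k : ℝ) + 1) * a * x)

section sineHeat

variable {a t : ℝ}

theorem summable_pow_mul_heatCoeff (n : ℕ) (ha : a ≠ 0) (ht : 0 < t) :
    Summable fun k : ℕ => ((k : ℝ) + 1) ^ n * heatCoeff a t k := by
  refine (summable_pow_mul_exp_neg_mul_sq (n + 1) (c := a ^ 2 * t / 2) (by positivity)).congr
    fun k => ?_
  rw [heatCoeff, show -(((k : ℝ) + 1) * a) ^ 2 * t / 2 = -(a ^ 2 * t / 2) * ((k : ℝ) + 1) ^ 2 by
    ring]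
  ring

theorem heatCoeff_nonneg (a t : ℝ) (k : ℕ) : 0 ≤ heatCoeff a t k := by
  unfold heatCoeff
  positivity

theorem heatCoeff_le_of_le {s : ℝ} (hts : t ≤ s) (k : ℕ) : heatCoeff a s k ≤ heatCoeff a t k := by
  have hdec : -(((k : ℝ) + 1) * a) ^ 2 * s / 2 ≤ -(((k : ℝ) + 1) * a) ^ 2 * t / 2 := by
    nlinarith [mul_le_mul_of_nonneg_left hts (sq_nonneg (((k : ℝ) + 1) * a))]
  exact mul_le_mul_of_nonneg_left (exp_le_exp.2 hdec) (by positivity)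

theorem hasDerivAt_heatCoeff (k : ℕ) :
    HasDerivAt (fun s => heatCoeff a s k) (-(((k : ℝ) + 1) * a) ^ 2 / 2 * heatCoeff a t k) t := by
  unfold heatCoeff
  exact ((((hasDerivAt_id' t).const_mul _).div_const 2).exp.const_mul _).congr_deriv (by ring)

theorem hasDerivAt_sineHeat (ha : a ≠ 0) (ht : 0 < t) (x : ℝ) :
    HasDerivAt (fun y => sineHeat a y t)
      (∑' k : ℕ, heatCoeff a t k * (((k : ℝ) + 1) * a) * cos (((k : ℝ) + 1) * a * x)) x :=
  hasDerivAt_tsum_mul_comp_mul Real.hasDerivAt_sin abs_cos_le_one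
    (by simpa using summable_pow_mul_heatCoeff 1 ha ht) a x

theorem hasDerivAt_deriv_sineHeat (ha : a ≠ 0) (ht : 0 < t) (x : ℝ) :
    HasDerivAt (deriv fun y => sineHeat a y t)
      (∑' k : ℕ, heatCoeff a t k * (((k : ℝ) + 1) * a) * (((k : ℝ) + 1) * a) *
        -sin (((k : ℝ) + 1) * a * x)) x := by
  rw [funext fun y => (hasDerivAt_sineHeat ha ht y).deriv]
  refine hasDerivAt_tsum_mul_comp_mul Real.hasDerivAt_cos (fun y => (abs_neg (sin y)).trans_le
    (abs_sin_le_one y)) ?_ a x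
  exact ((summable_pow_mul_heatCoeff 2 ha ht).mul_left a).congr fun k => by ring

theorem hasDerivAt_sineHeat_time (ha : a ≠ 0) (ht : 0 < t) (x : ℝ) :
    HasDerivAt (fun s => sineHeat a x s)
      (∑' k : ℕ, -(((k : ℝ) + 1) * a) ^ 2 / 2 * heatCoeff a t k *
        sin (((k : ℝ) + 1) * a * x)) t := by
  have hsin (k : ℕ) : |sin (((k : ℝ) + 1) * a * x)| ≤ 1 := abs_sin_le_one _
  -- on `s > t / 2` the derivatives are dominated by the summable weights at time `t / 2`
  refine hasDerivAt_tsum_of_isPreconnected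
    (g := fun k s => heatCoeff a s k * sin (((k : ℝ) + 1) * a * x))
    (g' := fun k s => -(((k : ℝ) + 1) * a) ^ 2 / 2 * heatCoeff a s k * sin (((k : ℝ) + 1) * a * x))
    ((summable_pow_mul_heatCoeff 2 ha (half_pos ht)).mul_left (a ^ 2 / 2)) isOpen_Ioi
    isPreconnected_Ioi (fun k s _ => (hasDerivAt_heatCoeff k).mul_const _) (fun k s hs => ?_)
    (half_lt_self ht) ?_ (half_lt_self ht)
  · calc ‖-(((k : ℝ) + 1) * a) ^ 2 / 2 * heatCoeff a s k * sin (((k : ℝ) + 1) * a * x)‖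
        = (((k : ℝ) + 1) * a) ^ 2 / 2 * heatCoeff a s k * |sin (((k : ℝ) + 1) * a * x)| := by
          rw [Real.norm_eq_abs, abs_mul, abs_mul, abs_of_nonneg (heatCoeff_nonneg a s k), neg_div,
            abs_neg, abs_of_nonneg (by positivity)]
      _ ≤ (((k : ℝ) + 1) * a) ^ 2 / 2 * heatCoeff a (t / 2) k * 1 := by
          gcongr
          exacts [mul_nonneg (by positivity) (heatCoeff_nonneg a _ k),
            heatCoeff_le_of_le (le_of_lt hs) k, hsin k]
      _ = a ^ 2 / 2 * (((k : ℝ) + 1) ^ 2 * heatCoeff a (t / 2) k) := by ring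
  · refine .of_norm_bounded (by simpa using summable_pow_mul_heatCoeff 0 ha ht) fun k => ?_
    rw [Real.norm_eq_abs, abs_mul, abs_of_nonneg (heatCoeff_nonneg a t k)]
    exact mul_le_of_le_one_right (heatCoeff_nonneg a t k) (hsin k)

theorem sineHeat_heat_equation (ha : a ≠ 0) (ht : 0 < t) (x : ℝ) :
    ∃ L, HasDerivAt (deriv fun y => sineHeat a y t) L x ∧
      HasDerivAt (fun s => sineHeat a x s) (L / 2) t := by
  refine ⟨_, hasDerivAt_deriv_sineHeat ha ht x, (hasDerivAt_sineHeat_time ha ht x).congr_deriv ?_⟩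
  rw [← tsum_div_const]
  exact tsum_congr fun k => by ring

end sineHeat

theorem hasDerivAt_deriv_div_self {u u' : ℝ → ℝ} {u'' r : ℝ}
    (hu : ∀ᶠ ρ in 𝓝 r, HasDerivAt u (u' ρ) ρ) (hu' : HasDerivAt u' u'' r) (hr : r ≠ 0) :
    HasDerivAt (deriv fun ρ => u ρ / ρ) (u'' / r - 2 / r * deriv (fun ρ => u ρ / ρ) r) r := by
  have hderiv : deriv (fun ρ => u ρ / ρ) =ᶠ[𝓝 r] fun ρ => (u' ρ * ρ - u ρ) / ρ ^ 2 := by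
    filter_upwards [hu, eventually_ne_nhds hr] with ρ hρ hρ0
    exact (hρ.fun_div (hasDerivAt_id' ρ) hρ0).deriv.trans (by ring)
  have hquot := ((hu'.fun_mul (hasDerivAt_id' r)).fun_sub hu.self_of_nhds).fun_div
    ((hasDerivAt_id' r).fun_pow 2) (pow_ne_zero 2 hr)
  refine (hquot.congr_of_eventuallyEq hderiv).congr_deriv ?_
  rw [hderiv.self_of_nhds]
  field_simp
  ring

theorem g_eq_sineHeat_div {R : ℝ} (hR : R ≠ 0) (ρ t : ℝ) :
    g R ρ t = sineHeat (π / R) ρ t / (2 * R ^ 2) / ρ := by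
  rw [g, sineHeat, ← tsum_div_const, ← tsum_div_const]
  refine tsum_congr fun k => ?_
  rw [heatCoeff, show ((k : ℝ) + 1) * (π / R) * ρ = ((k : ℝ) + 1) * π * ρ / R by ring,
    show -(((k : ℝ) + 1) * (π / R)) ^ 2 * t / 2 = -(((k : ℝ) + 1) ^ 2 * π ^ 2 * t) / (2 * R ^ 2) by
      field_simp]
  field_simp

/-- `g` satisfies the radial heat equation in the 3-ball:
`∂g/∂t = (1/2)(∂²g/∂r² + (2/r) ∂g/∂r)` for all `r ∈ (0, R)` and `t > 0`;
in particular these derivatives of the series exist at all such points. -/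
theorem g_satisfies_radial_heat_equation (R : ℝ) (hR : 0 < R) (r t : ℝ)
    (hr : r ∈ Set.Ioo 0 R) (ht : 0 < t) :
    DifferentiableAt ℝ (fun s => g R r s) t ∧
    DifferentiableAt ℝ (fun ρ => g R ρ t) r ∧
    DifferentiableAt ℝ (deriv (fun ρ => g R ρ t)) r ∧
    deriv (fun s => g R r s) t =
      (1 / 2) * (deriv (deriv (fun ρ => g R ρ t)) r +
        (2 / r) * deriv (fun ρ => g R ρ t) r) := by
  have hr0 : r ≠ 0 := hr.1.ne'
  have ha : π / R ≠ 0 := div_ne_zero pi_ne_zero hR.ne'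
  obtain ⟨L, hxx, htime⟩ := sineHeat_heat_equation ha ht r
  set c := 2 * R ^ 2
  have hspace (ρ : ℝ) : HasDerivAt (fun y => sineHeat (π / R) y t / c)
      (deriv (fun y => sineHeat (π / R) y t) ρ / c) ρ :=
    (hasDerivAt_sineHeat ha ht ρ).differentiableAt.hasDerivAt.div_const c
  simp only [g_eq_sineHeat_div hR.ne']
  have hT := (htime.div_const c).div_const r
  have hG := (hspace r).div (hasDerivAt_id' r) hr0
  have hG' := hasDerivAt_deriv_div_self (.of_forall hspace) (hxx.div_const c) hr0
  refine ⟨hT.differentiableAt, hG.differentiableAt, hG'.differentiableAt, ?_⟩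
  rw [hT.deriv, hG'.deriv]
  field_simp
  ring
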